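/- For all unit vectors a, b ∈ S², (1/(2π)) ∫_{S²} (a·λ) sgn(b·λ) dσ(λ) = a·b. Consequently, if λ_s has density ρ_a(λ) = |a·λ|/(2π) with respect to σ and Alice and Bob output A = -sgn(a·λ_s) and B = sgn(b·λ_s), then E(AB) = -a·b, reproducing the singlet joint correlation. -/

import Mathlib

open MeasureTheory Metric
open scoped RealInnerProductSpace

/-- The unit sphere in ℝ³. -/
noncomputable abbrev Sphere2 := Metric.sphere (0 : EuclideanSpace ℝ (Fin 3)) 1

/-- The surface measure `σ` on the unit sphere of ℝ³ (total mass `4π`). -/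
noncomputable def sphereMeasure : Measure Sphere2 :=
  (volume : Measure (EuclideanSpace ℝ (Fin 3))).toSphere

/-- `sgn(x) = 1` if `x ≥ 0`, `-1` if `x < 0`. -/
noncomputable def sgn (x : ℝ) : ℝ := if 0 ≤ x then 1 else -1

namespace SamplingAux

open Real Set

lemma sgn_pos_smul {c : ℝ} (hc : 0 < c) (x : ℝ) : sgn (c * x) = sgn x := by
  unfold sgn
  simp [mul_nonneg_iff_of_pos_left hc]

lemma mul_sgn_self (x : ℝ) : x * sgn x = |x| := by
  unfold sgn
  rcases le_or_gt 0 x with h | h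
  · simp [h, abs_of_nonneg h]
  · simp [not_le.mpr h, abs_of_neg h]

lemma sgn_measurable : Measurable sgn := by
  unfold sgn
  exact Measurable.ite measurableSet_Ici measurable_const measurable_const

lemma sgn_norm_le_one (x : ℝ) : ‖sgn x‖ ≤ 1 := by
  unfold sgn
  split <;> simp

lemma integrable_exp_sq : Integrable fun x : ℝ => exp (-x ^ 2) := by
  have := integrable_exp_neg_mul_sq (one_pos)
  simpa using this

lemma integrable_id_exp_sq : Integrable fun x : ℝ => x * exp (-x ^ 2) := by
  have := integrable_mul_exp_neg_mul_sq (one_pos)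
  simpa using this

lemma integrable_abs_exp_sq : Integrable fun x : ℝ => |x| * exp (-x ^ 2) := by
  have := integrable_id_exp_sq.abs
  refine this.congr ?_
  filter_upwards with x
  rw [abs_mul, abs_of_nonneg (exp_pos _).le]

lemma integrable_sgn_mul_exp_sq : Integrable fun x : ℝ => sgn x * exp (-x ^ 2) :=
  integrable_exp_sq.bdd_mul (c := 1) sgn_measurable.aestronglyMeasurable
    (Filter.Eventually.of_forall sgn_norm_le_one)

lemma integrable_mul_sgn_exp_sq : Integrable fun x : ℝ => x * sgn x * exp (-x ^ 2) := by
  refine integrable_abs_exp_sq.congr ?_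
  filter_upwards with x
  rw [mul_sgn_self]

lemma integral_exp_sq : ∫ x : ℝ, exp (-x ^ 2) = Real.sqrt π := by
  have := integral_gaussian 1
  simpa using this

lemma integral_id_exp_sq : ∫ x : ℝ, x * exp (-x ^ 2) = 0 := by
  have h : ∫ x : ℝ, (fun t : ℝ => t * exp (-t ^ 2)) (-x) = ∫ x : ℝ, x * exp (-x ^ 2) :=
    (Measure.measurePreserving_neg (volume : Measure ℝ)).integral_comp
      (Homeomorph.neg ℝ).measurableEmbedding (fun t : ℝ => t * exp (-t ^ 2))
  have h2 : ∫ x : ℝ, (fun t : ℝ => t * exp (-t ^ 2)) (-x) = ∫ x : ℝ, -(x * exp (-x ^ 2)) := by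
    congr 1
    funext x
    simp only [neg_sq, neg_mul]
  rw [h2, MeasureTheory.integral_neg] at h
  linarith

lemma integral_Ioi_id_exp_sq : ∫ x in Ioi (0 : ℝ), x * exp (-x ^ 2) = 1 / 2 := by
  have A : ∀ x : ℝ, HasDerivAt (fun t : ℝ => -exp (-t ^ 2) / 2) (x * exp (-x ^ 2)) x := by
    intro x
    have h1 : HasDerivAt (fun t : ℝ => -t ^ 2) (-(2 * x)) x := by
      simpa using ((hasDerivAt_pow 2 x).fun_neg)
    have := (h1.exp).fun_neg.div_const 2
    refine this.congr_deriv ?_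
    ring
  have B : Filter.Tendsto (fun t : ℝ => -exp (-t ^ 2) / 2) Filter.atTop (nhds 0) := by
    have h0 : Filter.Tendsto (fun t : ℝ => -t ^ 2) Filter.atTop Filter.atBot := by
      simpa using (Filter.tendsto_pow_atTop (two_ne_zero)).neg_const_mul_atTop
        (show (-1 : ℝ) < 0 by norm_num) |>.congr (fun x => by ring)
    have := (Real.tendsto_exp_atBot.comp h0).neg.div_const 2
    simpa using this
  have hInt : IntegrableOn (fun x : ℝ => x * exp (-x ^ 2)) (Ioi 0) :=
    integrable_id_exp_sq.integrableOn
  have := integral_Ioi_of_hasDerivAt_of_tendsto' (fun x _ => A x) hInt B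
  rw [this]
  norm_num

lemma integral_abs_exp_sq : ∫ x : ℝ, |x| * exp (-x ^ 2) = 1 := by
  have h : ∫ x : ℝ, |x| * exp (-x ^ 2) = ∫ x : ℝ, (fun t : ℝ => t * exp (-t ^ 2)) |x| := by
    congr 1
    funext x
    simp [sq_abs]
  rw [h, integral_comp_abs (f := fun t : ℝ => t * exp (-t ^ 2)), integral_Ioi_id_exp_sq]
  norm_num

lemma integral_cube_exp_sq : ∫ x in Ioi (0 : ℝ), x ^ 2 * (x * exp (-x ^ 2)) = 1 / 2 := by
  have A : ∀ x : ℝ, HasDerivAt (fun t : ℝ => -(t ^ 2 + 1) / 2 * exp (-t ^ 2))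
      (x ^ 2 * (x * exp (-x ^ 2))) x := by
    intro x
    have h1 : HasDerivAt (fun t : ℝ => -(t ^ 2 + 1) / 2) (-x) x := by
      have := ((hasDerivAt_pow 2 x).add_const 1).fun_neg.div_const 2
      refine this.congr_deriv ?_
      ring
    have h2 : HasDerivAt (fun t : ℝ => exp (-t ^ 2)) (exp (-x ^ 2) * (-(2 * x))) x := by
      have h0 : HasDerivAt (fun t : ℝ => -t ^ 2) (-(2 * x)) x := by
        simpa using ((hasDerivAt_pow 2 x).fun_neg)
      exact h0.exp
    have := h1.fun_mul h2
    refine this.congr_deriv ?_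
    ring
  have B : Filter.Tendsto (fun t : ℝ => -(t ^ 2 + 1) / 2 * exp (-t ^ 2))
      Filter.atTop (nhds 0) := by
    have h1 : Filter.Tendsto (fun t : ℝ => t ^ 2 * exp (-t ^ 2)) Filter.atTop (nhds 0) := by
      have h0 : Filter.Tendsto (fun t : ℝ => t ^ 2) Filter.atTop Filter.atTop :=
        Filter.tendsto_pow_atTop two_ne_zero
      have := (Real.tendsto_pow_mul_exp_neg_atTop_nhds_zero 1).comp h0
      simpa [Function.comp_def] using this
    have h2 : Filter.Tendsto (fun t : ℝ => exp (-t ^ 2)) Filter.atTop (nhds 0) := by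
      have h0 : Filter.Tendsto (fun t : ℝ => -t ^ 2) Filter.atTop Filter.atBot := by
        simpa using (Filter.tendsto_pow_atTop (two_ne_zero)).neg_const_mul_atTop
          (show (-1 : ℝ) < 0 by norm_num) |>.congr (fun x => by ring)
      exact Real.tendsto_exp_atBot.comp h0
    have := ((h1.add h2).div_const 2).neg
    simp only [add_zero, neg_zero, zero_div] at this
    refine this.congr fun t => ?_
    ring
  have hInt : IntegrableOn (fun x : ℝ => x ^ 2 * (x * exp (-x ^ 2))) (Ioi 0) := by
    have := integrableOn_rpow_mul_exp_neg_mul_sq (one_pos) (show (-1 : ℝ) < 3 by norm_num)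
    refine (this.congr_fun ?_ measurableSet_Ioi)
    intro x hx
    show x ^ (3 : ℝ) * exp (-1 * x ^ 2) = x ^ 2 * (x * exp (-x ^ 2))
    rw [show ((3 : ℝ)) = ((3 : ℕ) : ℝ) by norm_num, Real.rpow_natCast, neg_one_mul]
    ring
  have := integral_Ioi_of_hasDerivAt_of_tendsto' (fun x _ => A x) hInt B
  rw [this]
  norm_num

lemma integral_volumeIoiPow (n : ℕ) (f : ℝ → ℝ) :
    ∫ x : Ioi (0 : ℝ), f x ∂(Measure.volumeIoiPow n) = ∫ x in Ioi (0 : ℝ), x ^ n * f x := by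
  rw [Measure.volumeIoiPow]
  simp only [ENNReal.ofReal]
  rw [integral_withDensity_eq_integral_smul
      ((measurable_subtype_coe.pow_const _).real_toNNReal)
      (fun x : Ioi (0:ℝ) => f x),
    integral_subtype_comap measurableSet_Ioi fun a : ℝ => (a ^ n).toNNReal • f a]
  refine setIntegral_congr_fun measurableSet_Ioi fun x hx => ?_
  rw [NNReal.smul_def, Real.coe_toNNReal _ (pow_nonneg hx.out.le _), smul_eq_mul]

noncomputable abbrev E3 := EuclideanSpace ℝ (Fin 3)

lemma integral_G (a b : E3) (hb : ‖b‖ = 1) :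
    ∫ x : E3, ⟪a, x⟫ * sgn ⟪b, x⟫ * exp (-‖x‖ ^ 2) = π * ⟪a, b⟫ := by
  classical
  obtain ⟨B, hB0⟩ : ∃ B : OrthonormalBasis (Fin 3) ℝ E3, B 0 = b := by
    have card : Module.finrank ℝ E3 = Fintype.card (Fin 3) := by
      simp [finrank_euclideanSpace_fin]
    have hv : Orthonormal ℝ (({0} : Set (Fin 3)).restrict (fun _ : Fin 3 => b)) := by
      constructor
      · intro i
        exact hb
      · intro i j hij
        exact absurd (Subtype.ext (i.2.trans j.2.symm)) hij
    obtain ⟨B, hB⟩ := hv.exists_orthonormalBasis_extension_of_card_eq card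
    exact ⟨B, hB 0 rfl⟩
  set w : EuclideanSpace ℝ (Fin 3) := B.repr a with hw
  have h1 : ∫ x : E3, ⟪a, x⟫ * sgn ⟪b, x⟫ * exp (-‖x‖ ^ 2)
      = ∫ y : EuclideanSpace ℝ (Fin 3),
          (∑ i, w i * y i) * sgn (y 0) * ∏ i, exp (-(y i) ^ 2) := by
    rw [← (B.measurePreserving_repr_symm).integral_comp
        (B.repr.symm.toHomeomorph.measurableEmbedding)
        (fun x : E3 => ⟪a, x⟫ * sgn ⟪b, x⟫ * exp (-‖x‖ ^ 2))]
    congr 1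
    funext y
    have hay : ⟪a, B.repr.symm y⟫ = ∑ i, w i * y i := by
      have h := B.repr.toLinearIsometry.inner_map_map a (B.repr.symm y)
      rw [LinearIsometryEquiv.coe_toLinearIsometry, LinearIsometryEquiv.apply_symm_apply] at h
      rw [← h, hw]
      simp [PiLp.inner_apply, RCLike.inner_apply, mul_comm]
    have hby : ⟪b, B.repr.symm y⟫ = y 0 := by
      have h := B.repr.toLinearIsometry.inner_map_map b (B.repr.symm y)
      rw [LinearIsometryEquiv.coe_toLinearIsometry, LinearIsometryEquiv.apply_symm_apply] at h
      rw [← h, ← hB0, B.repr_self]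
      simp [EuclideanSpace.inner_single_left]
    have hnorm : ‖(B.repr.symm y : E3)‖ = ‖y‖ := B.repr.symm.norm_map y
    have hns : ‖y‖ ^ 2 = ∑ i, (y i) ^ 2 := by
      rw [EuclideanSpace.norm_eq, Real.sq_sqrt (by positivity)]
      simp [sq_abs]
    have hexp : exp (-‖(B.repr.symm y : E3)‖ ^ 2) = ∏ i, exp (-(y i) ^ 2) := by
      rw [hnorm, hns, ← Finset.sum_neg_distrib, Real.exp_sum]
    simp only [hay, hby, hexp]
  rw [h1]
  have h2 : ∫ y : EuclideanSpace ℝ (Fin 3),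
        (∑ i, w i * y i) * sgn (y 0) * ∏ i, exp (-(y i) ^ 2)
      = ∫ z : Fin 3 → ℝ, (∑ i, w i * z i) * sgn (z 0) * ∏ i, exp (-(z i) ^ 2) := by
    rw [← ((EuclideanSpace.volume_preserving_symm_measurableEquiv_toLp (Fin 3)).symm).integral_comp
        (MeasurableEquiv.measurableEmbedding _)
        (fun y : EuclideanSpace ℝ (Fin 3) =>
          (∑ i, w i * y i) * sgn (y 0) * ∏ i, exp (-(y i) ^ 2))]
    rfl
  rw [h2]
  set f₀ : Fin 3 → ℝ → ℝ :=
    ![fun t => t * sgn t * exp (-t ^ 2), fun t => exp (-t ^ 2), fun t => exp (-t ^ 2)] with hf₀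
  set f₁ : Fin 3 → ℝ → ℝ :=
    ![fun t => sgn t * exp (-t ^ 2), fun t => t * exp (-t ^ 2), fun t => exp (-t ^ 2)] with hf₁
  set f₂ : Fin 3 → ℝ → ℝ :=
    ![fun t => sgn t * exp (-t ^ 2), fun t => exp (-t ^ 2), fun t => t * exp (-t ^ 2)] with hf₂
  have key : ∀ z : Fin 3 → ℝ, (∑ i, w i * z i) * sgn (z 0) * ∏ i, exp (-(z i) ^ 2)
      = w 0 * ∏ i, f₀ i (z i) + w 1 * ∏ i, f₁ i (z i) + w 2 * ∏ i, f₂ i (z i) := by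
    intro z
    simp only [hf₀, hf₁, hf₂, Fin.sum_univ_three, Fin.prod_univ_three, Matrix.cons_val_zero,
      Matrix.cons_val_one, Matrix.head_cons, Matrix.cons_val_two, Matrix.tail_cons]
    ring
  have hint0 : Integrable fun z : Fin 3 → ℝ => ∏ i, f₀ i (z i) := by
    refine Integrable.fintype_prod fun i => ?_
    fin_cases i <;>
      simp only [hf₀, Matrix.cons_val_zero, Matrix.cons_val_one, Matrix.head_cons,
        Matrix.cons_val_two, Matrix.tail_cons] <;>
      first
        | exact integrable_mul_sgn_exp_sq
        | exact integrable_exp_sq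
  have hint1 : Integrable fun z : Fin 3 → ℝ => ∏ i, f₁ i (z i) := by
    refine Integrable.fintype_prod fun i => ?_
    fin_cases i <;>
      simp only [hf₁, Matrix.cons_val_zero, Matrix.cons_val_one, Matrix.head_cons,
        Matrix.cons_val_two, Matrix.tail_cons] <;>
      first
        | exact integrable_sgn_mul_exp_sq
        | exact integrable_id_exp_sq
        | exact integrable_exp_sq
  have hint2 : Integrable fun z : Fin 3 → ℝ => ∏ i, f₂ i (z i) := by
    refine Integrable.fintype_prod fun i => ?_
    fin_cases i <;>
      simp only [hf₂, Matrix.cons_val_zero, Matrix.cons_val_one, Matrix.head_cons,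
        Matrix.cons_val_two, Matrix.tail_cons] <;>
      first
        | exact integrable_sgn_mul_exp_sq
        | exact integrable_id_exp_sq
        | exact integrable_exp_sq
  have hI0 : ∫ z : Fin 3 → ℝ, ∏ i, f₀ i (z i) = π := by
    rw [MeasureTheory.integral_fintype_prod_volume_eq_prod (𝕜 := ℝ) f₀, Fin.prod_univ_three]
    simp only [hf₀, Matrix.cons_val_zero, Matrix.cons_val_one, Matrix.head_cons,
      Matrix.cons_val_two, Matrix.tail_cons]
    have e0 : ∫ x : ℝ, x * sgn x * exp (-x ^ 2) = 1 := by
      rw [show (fun x : ℝ => x * sgn x * exp (-x ^ 2))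
          = fun x : ℝ => |x| * exp (-x ^ 2) from funext fun x => by rw [mul_sgn_self]]
      exact integral_abs_exp_sq
    rw [e0, integral_exp_sq, one_mul, Real.mul_self_sqrt Real.pi_nonneg]
  have hI1 : ∫ z : Fin 3 → ℝ, ∏ i, f₁ i (z i) = 0 := by
    rw [MeasureTheory.integral_fintype_prod_volume_eq_prod (𝕜 := ℝ) f₁, Fin.prod_univ_three]
    simp only [hf₁, Matrix.cons_val_zero, Matrix.cons_val_one, Matrix.head_cons,
      Matrix.cons_val_two, Matrix.tail_cons]
    rw [integral_id_exp_sq]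
    ring
  have hI2 : ∫ z : Fin 3 → ℝ, ∏ i, f₂ i (z i) = 0 := by
    rw [MeasureTheory.integral_fintype_prod_volume_eq_prod (𝕜 := ℝ) f₂, Fin.prod_univ_three]
    simp only [hf₂, Matrix.cons_val_zero, Matrix.cons_val_one, Matrix.head_cons,
      Matrix.cons_val_two, Matrix.tail_cons]
    rw [integral_id_exp_sq]
    ring
  calc ∫ z : Fin 3 → ℝ, (∑ i, w i * z i) * sgn (z 0) * ∏ i, exp (-(z i) ^ 2)
      = ∫ z : Fin 3 → ℝ,
          (w 0 * ∏ i, f₀ i (z i) + w 1 * ∏ i, f₁ i (z i) + w 2 * ∏ i, f₂ i (z i)) := by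
        exact integral_congr_ae (Filter.Eventually.of_forall key)
    _ = w 0 * (∫ z : Fin 3 → ℝ, ∏ i, f₀ i (z i)) + w 1 * (∫ z : Fin 3 → ℝ, ∏ i, f₁ i (z i))
          + w 2 * (∫ z : Fin 3 → ℝ, ∏ i, f₂ i (z i)) := by
        have A1 : Integrable fun z : Fin 3 → ℝ => w 0 * ∏ i, f₀ i (z i) := hint0.const_mul _
        have A2 : Integrable fun z : Fin 3 → ℝ => w 1 * ∏ i, f₁ i (z i) := hint1.const_mul _
        have A3 : Integrable fun z : Fin 3 → ℝ => w 2 * ∏ i, f₂ i (z i) := hint2.const_mul _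
        have A12 : Integrable fun z : Fin 3 → ℝ =>
            w 0 * ∏ i, f₀ i (z i) + w 1 * ∏ i, f₁ i (z i) := A1.add A2
        rw [integral_add A12 A3, integral_add A1 A2,
          MeasureTheory.integral_const_mul, MeasureTheory.integral_const_mul,
          MeasureTheory.integral_const_mul]
    _ = w 0 * π := by rw [hI0, hI1, hI2]; ring
    _ = π * ⟪a, b⟫ := by
        rw [hw, B.repr_apply_apply, hB0, real_inner_comm]
        ring

lemma sphere_integral (a b : E3) (hb : ‖b‖ = 1) :
    ∫ l : Sphere2, ⟪a, (l : E3)⟫ * sgn ⟪b, (l : E3)⟫ ∂sphereMeasure = 2 * π * ⟪a, b⟫ := by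
  have hdim : Module.finrank ℝ E3 = 3 := finrank_euclideanSpace_fin
  have step1 : ∫ x : E3, ⟪a, x⟫ * sgn ⟪b, x⟫ * exp (-‖x‖ ^ 2)
      = (∫ l : Sphere2, ⟪a, (l : E3)⟫ * sgn ⟪b, (l : E3)⟫ ∂sphereMeasure) * (1 / 2) := by
    have h0 : ∫ x : E3, ⟪a, x⟫ * sgn ⟪b, x⟫ * exp (-‖x‖ ^ 2)
        = ∫ x : ({0}ᶜ : Set E3), ⟪a, (x : E3)⟫ * sgn ⟪b, (x : E3)⟫ * exp (-‖(x : E3)‖ ^ 2)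
            ∂((volume : Measure E3).comap Subtype.val) := by
      rw [integral_subtype_comap (measurableSet_singleton (0 : E3)).compl
        (fun x : E3 => ⟪a, x⟫ * sgn ⟪b, x⟫ * exp (-‖x‖ ^ 2)),
        MeasureTheory.restrict_compl_singleton (0 : E3)]
    have h1 := (Measure.measurePreserving_homeomorphUnitSphereProd
        (volume : Measure E3)).integral_comp (Homeomorph.measurableEmbedding _)
        (fun p : Sphere2 × Set.Ioi (0 : ℝ) =>
          (⟪a, (p.1 : E3)⟫ * sgn ⟪b, (p.1 : E3)⟫) * ((p.2 : ℝ) * exp (-(p.2 : ℝ) ^ 2)))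
    have h2 : ∀ x : ({0}ᶜ : Set E3),
        ⟪a, (x : E3)⟫ * sgn ⟪b, (x : E3)⟫ * exp (-‖(x : E3)‖ ^ 2)
        = (fun p : Sphere2 × Set.Ioi (0 : ℝ) =>
            (⟪a, (p.1 : E3)⟫ * sgn ⟪b, (p.1 : E3)⟫) * ((p.2 : ℝ) * exp (-(p.2 : ℝ) ^ 2)))
          ((homeomorphUnitSphereProd E3) x) := by
      intro x
      have hx : (x : E3) ≠ 0 := x.2
      have hnorm : (0 : ℝ) < ‖(x : E3)‖ := norm_pos_iff.mpr hx
      simp only [homeomorphUnitSphereProd_apply_fst_coe, homeomorphUnitSphereProd_apply_snd_coe,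
        real_inner_smul_right]
      rw [sgn_pos_smul (inv_pos.mpr hnorm)]
      field_simp
    rw [h0, integral_congr_ae (Filter.Eventually.of_forall h2), h1]
    have hpm := MeasureTheory.integral_prod_mul
      (f := fun s : Sphere2 => ⟪a, (s : E3)⟫ * sgn ⟪b, (s : E3)⟫)
      (g := fun r : Set.Ioi (0 : ℝ) => (r : ℝ) * exp (-(r : ℝ) ^ 2))
      (μ := (volume : Measure E3).toSphere)
      (ν := Measure.volumeIoiPow (Module.finrank ℝ E3 - 1))
    rw [hpm, integral_volumeIoiPow (Module.finrank ℝ E3 - 1) (fun t : ℝ => t * exp (-t ^ 2))]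
    have h21 : Module.finrank ℝ E3 - 1 = 2 := by rw [hdim]
    rw [h21, integral_cube_exp_sq]
    rfl
  have step2 := integral_G a b hb
  rw [step1] at step2
  linarith

end SamplingAux

theorem sampling_theorem_correlation (a b : EuclideanSpace ℝ (Fin 3))
    (ha : ‖a‖ = 1) (hb : ‖b‖ = 1) :
    (1 / (2 * Real.pi)) *
      ∫ l : Sphere2, ⟪a, (l : EuclideanSpace ℝ (Fin 3))⟫ *
        sgn ⟪b, (l : EuclideanSpace ℝ (Fin 3))⟫ ∂sphereMeasure = ⟪a, b⟫ ∧
    (1 / (2 * Real.pi)) *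
      ∫ l : Sphere2, |⟪a, (l : EuclideanSpace ℝ (Fin 3))⟫| *
        ((-sgn ⟪a, (l : EuclideanSpace ℝ (Fin 3))⟫) *
          sgn ⟪b, (l : EuclideanSpace ℝ (Fin 3))⟫) ∂sphereMeasure = -⟪a, b⟫ := by
  have key := SamplingAux.sphere_integral a b hb
  have hpi : Real.pi ≠ 0 := Real.pi_ne_zero
  constructor
  · rw [key]
    field_simp
  · have hpt : ∀ l : Sphere2,
        |⟪a, (l : EuclideanSpace ℝ (Fin 3))⟫| *
          ((-sgn ⟪a, (l : EuclideanSpace ℝ (Fin 3))⟫) *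
            sgn ⟪b, (l : EuclideanSpace ℝ (Fin 3))⟫) =
        -(⟪a, (l : EuclideanSpace ℝ (Fin 3))⟫ * sgn ⟪b, (l : EuclideanSpace ℝ (Fin 3))⟫) := by
      intro l
      rw [← SamplingAux.mul_sgn_self ⟪a, (l : EuclideanSpace ℝ (Fin 3))⟫]
      have h : ∀ x : ℝ, sgn x * sgn x = 1 := by
        intro x; unfold sgn; split <;> norm_num
      linear_combination (-(⟪a, (l : EuclideanSpace ℝ (Fin 3))⟫ *
        sgn ⟪b, (l : EuclideanSpace ℝ (Fin 3))⟫)) * h ⟪a, (l : EuclideanSpace ℝ (Fin 3))⟫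
    rw [show (fun l : Sphere2 => |⟪a, (l : EuclideanSpace ℝ (Fin 3))⟫| *
          ((-sgn ⟪a, (l : EuclideanSpace ℝ (Fin 3))⟫) *
            sgn ⟪b, (l : EuclideanSpace ℝ (Fin 3))⟫)) =
        (fun l : Sphere2 => -(⟪a, (l : EuclideanSpace ℝ (Fin 3))⟫ *
            sgn ⟪b, (l : EuclideanSpace ℝ (Fin 3))⟫)) from funext hpt,
      MeasureTheory.integral_neg, key]
    field_simp
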